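/- arXiv:2407.12403 — 2 statements merged into one kernel-verified Lean document; each statement's English description precedes it below -/
import Mathlib

section
/- For every d ≥ 1 and every n ≥ 1, there exists a symmetric density matrix σ^u on (ℂ^d)^{⊗n} such that every symmetric density matrix σ on (ℂ^d)^{⊗n} satisfies σ ≤ (n+1)^{d²−1}·σ^u. -/
open scoped Kronecker ComplexOrder
open Matrix Filter

noncomputable section

/-- Real power of a Hermitian matrix via functional calculus (spectral powers,
with the convention `0 ^ t = 0`); junk value `0` on non-Hermitian matrices. -/
noncomputable def Matrix.herPow {n : Type*} [Fintype n] [DecidableEq n]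
    (A : Matrix n n ℂ) (t : ℝ) : Matrix n n ℂ :=
  if hA : A.IsHermitian then
    (hA.eigenvectorUnitary : Matrix n n ℂ) *
      Matrix.diagonal (fun i =>
        Complex.ofReal (if hA.eigenvalues i = 0 then (0 : ℝ) else hA.eigenvalues i ^ t)) *
      star (hA.eigenvectorUnitary : Matrix n n ℂ)
  else 0

/-- The Petz Rényi divergence `D_α(ρ‖σ) = (1/(α−1))·log₂ tr(ρ^α σ^{1−α})`. -/
noncomputable def petzD {n : Type*} [Fintype n] [DecidableEq n]
    (α : ℝ) (ρ σ : Matrix n n ℂ) : ℝ :=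
  (α - 1)⁻¹ * Real.logb 2 ((ρ.herPow α * σ.herPow (1 - α)).trace.re)

/-- A density matrix: positive semidefinite with trace one. -/
def IsDensityMatrix {n : Type*} [Fintype n] (A : Matrix n n ℂ) : Prop :=
  A.PosSemidef ∧ A.trace = 1

/-- A probability distribution on a finite set. -/
def IsProbDist {X : Type*} [Fintype X] (p : X → ℝ) : Prop :=
  (∀ x, 0 ≤ p x) ∧ ∑ x, p x = 1

/-- The cq state `ρ_XB = Σ_x p_x |x⟩⟨x| ⊗ ρ_x`. -/
noncomputable def cqState {X B : Type*} [Fintype X] [DecidableEq X] [Fintype B] [DecidableEq B]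
    (p : X → ℝ) (ρ : X → Matrix B B ℂ) : Matrix (X × B) (X × B) ℂ :=
  ∑ x, (p x : ℂ) • (Matrix.single x x 1 ⊗ₖ ρ x)

/-- The Rényi mutual information `I_α(N,p) = inf_{σ_B} D_α(ρ_XB ‖ ρ_X ⊗ σ_B)`. -/
noncomputable def Ialpha {X B : Type*} [Fintype X] [DecidableEq X] [Fintype B] [DecidableEq B]
    (α : ℝ) (ρ : X → Matrix B B ℂ) (p : X → ℝ) : ℝ :=
  ⨅ σ : {σ : Matrix B B ℂ // IsDensityMatrix σ},
    petzD α (cqState p ρ) ((Matrix.diagonal fun x => (p x : ℂ)) ⊗ₖ (σ : Matrix B B ℂ))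

/-- The channel Rényi mutual information `I_α(N) = max_p I_α(N,p)`. -/
noncomputable def IalphaChan {X B : Type*} [Fintype X] [DecidableEq X] [Fintype B] [DecidableEq B]
    (α : ℝ) (ρ : X → Matrix B B ℂ) : ℝ :=
  ⨆ p : {p : X → ℝ // IsProbDist p}, Ialpha α ρ (p : X → ℝ)

/-- The tensor product state `ρ_{x^n} = ρ_{x_1} ⊗ ⋯ ⊗ ρ_{x_n}` (also serves as the
channel `N^{⊗n}`). -/
noncomputable def prodState {X B : Type*} {n : ℕ} (ρ : X → Matrix B B ℂ)
    (xs : Fin n → X) : Matrix (Fin n → B) (Fin n → B) ℂ :=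
  fun v w => ∏ i, ρ (xs i) (v i) (w i)

/-- `Pe ρ n M`: the infimum of the average error probability over all `(n, M)` codes
for the cq channel `x ↦ ρ x`. -/
noncomputable def Pe {X B : Type*} [Fintype X] [Fintype B] [DecidableEq B]
    (ρ : X → Matrix B B ℂ) (n M : ℕ) : ℝ :=
  sInf {e | ∃ (c : Fin M → (Fin n → X)) (Λ : Fin M → Matrix (Fin n → B) (Fin n → B) ℂ),
    (∀ m, (Λ m).PosSemidef) ∧ (∑ m, Λ m = 1) ∧
    e = 1 - (M : ℝ)⁻¹ * ∑ m, ((Λ m * prodState ρ (c m)).trace).re}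

/-- The reliability function `E(N,r) = limsup_n −(1/n)·log₂ P_e^{(n)}(N,r)`,
where the number of messages is `⌈2^{nr}⌉`. -/
noncomputable def relFn {X B : Type*} [Fintype X] [Fintype B] [DecidableEq B]
    (ρ : X → Matrix B B ℂ) (r : ℝ) : ℝ :=
  Filter.limsup (fun n : ℕ =>
    -(1 / (n : ℝ)) * Real.logb 2 (Pe ρ n ⌈(2 : ℝ) ^ ((n : ℝ) * r)⌉₊)) Filter.atTop

/-- Von Neumann entropy `S(ρ) = −tr(ρ log₂ ρ)` computed via eigenvalues. -/
noncomputable def vNEntropy {n : Type*} [Fintype n] [DecidableEq n] (A : Matrix n n ℂ) : ℝ :=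
  if hA : A.IsHermitian then -∑ i, hA.eigenvalues i * Real.logb 2 (hA.eigenvalues i) else 0

/-- The Rényi conditional entropy `H_α^↑(X|B)_ρ = sup_{σ_B} (−D_α(ρ_XB ‖ 1_X ⊗ σ_B))`. -/
noncomputable def condRenyiH {X B : Type*} [Fintype X] [DecidableEq X] [Fintype B] [DecidableEq B]
    (α : ℝ) (ρXB : Matrix (X × B) (X × B) ℂ) : ℝ :=
  ⨆ σ : {σ : Matrix B B ℂ // IsDensityMatrix σ},
    -petzD α ρXB ((1 : Matrix X X ℂ) ⊗ₖ (σ : Matrix B B ℂ))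

/-- The permutation unitary `V_π` on the `n`-fold tensor power, as a matrix on the
index set `Fin n → A` (`V_π e_v = e_{v ∘ π⁻¹}`). -/
def permMatrixOn (A : Type*) [DecidableEq A] {n : ℕ} (π : Equiv.Perm (Fin n)) :
    Matrix (Fin n → A) (Fin n → A) ℂ :=
  fun v w => if w = v ∘ π then 1 else 0

/-- A symmetric (permutation-invariant) matrix on the `n`-fold tensor power. -/
def IsSymmetricState {d n : ℕ} (σ : Matrix (Fin n → Fin d) (Fin n → Fin d) ℂ) : Prop :=
  ∀ π : Equiv.Perm (Fin n),
    permMatrixOn (Fin d) π * σ * (permMatrixOn (Fin d) π)ᴴ = σ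

/-- Partial trace over the second tensor factor. -/
noncomputable def ptraceB {A B : Type*} [Fintype B] (M : Matrix (A × B) (A × B) ℂ) :
    Matrix A A ℂ :=
  fun a a' => ∑ b, M (a, b) (a', b)

/-- Partial trace over the first tensor factor. -/
noncomputable def ptraceA {A B : Type*} [Fintype A] (M : Matrix (A × B) (A × B) ℂ) :
    Matrix B B ℂ :=
  fun b b' => ∑ a, M (a, b) (a, b')

/-- The empirical distribution (type) of a sequence. -/
noncomputable def empDist {X : Type*} [Fintype X] [DecidableEq X] {n : ℕ}
    (xs : Fin n → X) : X → ℝ :=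
  fun x => (Finset.univ.filter fun i => xs i = x).card / (n : ℝ)

/-- A type for sequences of length `n`: a probability distribution whose entries are
integer multiples of `1/n`. -/
def IsType {X : Type*} [Fintype X] (n : ℕ) (t : X → ℝ) : Prop :=
  IsProbDist t ∧ ∀ x, ∃ k : ℕ, t x = (k : ℝ) / (n : ℝ)

/-- The uniform distribution on the type class `T_n^t`, extended by zero. -/
noncomputable def unifTypeClass {X : Type*} [Fintype X] [DecidableEq X] {n : ℕ}
    (t : X → ℝ) : (Fin n → X) → ℝ :=
  fun xs => if empDist xs = t then
    ((Finset.univ.filter fun ys : Fin n → X => empDist ys = t).card : ℝ)⁻¹ else 0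

/-- The error probability of a data-compression-with-side-information scheme. -/
noncomputable def dcErr {X : Type*} [Fintype X] {d : ℕ} (p : X → ℝ)
    (ρ : X → Matrix (Fin d) (Fin d) ℂ) (n : ℕ) {Chat Ctil : Type*} [Fintype Chat] [Fintype Ctil]
    (f : (Fin n → X) ≃ Chat × Ctil)
    (Λ : Ctil → Chat → Matrix (Fin n → Fin d) (Fin n → Fin d) ℂ) : ℝ :=
  ∑ xs : Fin n → X, (∏ i, p (xs i)) *
    (1 - ((Λ (f xs).2 (f xs).1 * prodState ρ xs).trace).re)


/-!
The symmetric density matrices form a compact convex set `C` in the real space of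
permutation-invariant Hermitian matrices. An invariant matrix is determined by its values on
the orbits of index pairs `(v, w)`, i.e. on multisets of `n` elements of `[d]²`, so this space
has dimension at most `multichoose (d²) n ≤ (n+1)^(d²-1)`; as `C` lies in the trace-one
hyperplane, its affine span has dimension `k < (n+1)^(d²-1)`.

For a compact convex set of affine dimension `k`, Helly's theorem applied to the sets
`{g | (k+1) g - x ∈ k C}`, `x ∈ C`, gives a common point `σᵘ ∈ C`: any `k + 1` of them meet at the
barycenter of their `x`'s (padded with a fixed point of `C`). Hence every `σ ∈ C` satisfies
`σ ≤ σ + k y = (k+1) σᵘ ≤ (n+1)^(d²-1) σᵘ` for some `y ∈ C`.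
-/

open scoped Pointwise
open Module Finset

theorem Nat.multichoose_le_pow (k n : ℕ) : Nat.multichoose k n ≤ (n + 1) ^ (k - 1) := by
  rcases k with _ | k
  · cases n <;> simp
  rw [Nat.multichoose_eq, show k + 1 + n - 1 = n + k by omega, Nat.choose_symm_add]
  simpa [show n + k + 1 - k = n + 1 by omega] using Nat.choose_le_sub_pow (n + k) k

def Sym.ofFn {α : Type*} {n : ℕ} (f : Fin n → α) : Sym α n :=
  ⟨univ.val.map f, by simp⟩

theorem Sym.exists_perm_of_ofFn_eq {α : Type*} [DecidableEq α] {n : ℕ} {f g : Fin n → α}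
    (h : Sym.ofFn f = Sym.ofFn g) : ∃ π : Equiv.Perm (Fin n), g = f ∘ π := by
  have hfib : ∀ a, Fintype.card {i // g i = a} = Fintype.card {i // f i = a} := fun a => by
    have := congrArg (fun s : Sym α n => Multiset.count a s.1) h
    simp only [Sym.ofFn, Multiset.count_map] at this
    simpa [Fintype.card_subtype, Finset.card, eq_comm] using this.symm
  refine ⟨(Equiv.sigmaFiberEquiv g).symm.trans ((Equiv.sigmaCongrRight fun a =>
    Fintype.equivOfCardEq (hfib a)).trans (Equiv.sigmaFiberEquiv f)), funext fun i => ?_⟩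
  exact ((Fintype.equivOfCardEq (hfib (g i)) ⟨i, rfl⟩).2).symm

section Convex

variable {E : Type*} [AddCommGroup E] [Module ℝ E]

theorem Convex.sum_mem_card_smul {ι : Type*} {C : Set E} (hC : Convex ℝ C) (hne : C.Nonempty)
    {t : Finset ι} {z : ι → E} (hz : ∀ i ∈ t, z i ∈ C) : ∑ i ∈ t, z i ∈ (#t : ℝ) • C := by
  classical
  induction t using Finset.induction_on with
  | empty => simp [Set.zero_smul_set hne]
  | insert a t ha ih =>
    rw [sum_insert ha, card_insert_of_notMem ha, Nat.cast_succ, add_comm (#t : ℝ),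
      hC.add_smul zero_le_one (Nat.cast_nonneg _), one_smul]
    exact Set.add_mem_add (hz a (mem_insert_self a t))
      (ih fun i hi => hz i (mem_insert_of_mem hi))

theorem Convex.sum_add_nsmul_sub_mem_smul {ι : Type*} [DecidableEq ι] {C : Set E}
    (hC : Convex ℝ C) {c₀ : E} (hc₀ : c₀ ∈ C) {I : Finset ι} {x : ι → E}
    (hx : ∀ i ∈ I, x i ∈ C) {k : ℕ} (hI : #I ≤ k + 1) {i : ι} (hi : i ∈ I) :
    ∑ j ∈ I, x j + (k + 1 - #I) • c₀ - x i ∈ (k : ℝ) • C := by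
  have hcard : ((#(I.erase i) : ℕ) : ℝ) + ((k + 1 - #I : ℕ) : ℝ) = k := by
    have : 1 ≤ #I := card_pos.2 ⟨i, hi⟩
    rw [card_erase_of_mem hi]
    exact_mod_cast (by omega : #I - 1 + (k + 1 - #I) = k)
  rw [← add_sum_erase I _ hi, add_assoc, add_sub_cancel_left, ← hcard,
    hC.add_smul (Nat.cast_nonneg _) (Nat.cast_nonneg _), ← Nat.cast_smul_eq_nsmul ℝ]
  exact Set.add_mem_add (hC.sum_mem_card_smul ⟨c₀, hc₀⟩ fun j hj => hx j (mem_of_mem_erase hj))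
    (Set.smul_mem_smul_set hc₀)

variable [TopologicalSpace E] [IsTopologicalAddGroup E] [ContinuousSMul ℝ E] [T2Space E]

theorem Convex.exists_mem_forall_smul_sub_mem_smul [FiniteDimensional ℝ E] {C : Set E}
    (hconv : Convex ℝ C) (hcpt : IsCompact C) (hne : C.Nonempty) :
    ∃ g ∈ C, ∀ x ∈ C, ((finrank ℝ E : ℝ) + 1) • g - x ∈ (finrank ℝ E : ℝ) • C := by
  classical
  set k := finrank ℝ E
  obtain ⟨c₀, hc₀⟩ := hne
  have hk : ((k : ℝ) + 1) ≠ 0 := by positivity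
  let F : C → Set E := fun x =>
    (fun y => ((k : ℝ) + 1)⁻¹ • (x : E) + ((k : ℝ) + 1)⁻¹ • y) '' ((k : ℝ) • C)
  have mem_F : ∀ (x : C) g, g ∈ F x ↔ ((k : ℝ) + 1) • g - x ∈ (k : ℝ) • C := by
    refine fun x g => ⟨?_, fun h => ⟨_, h, ?_⟩⟩
    · rintro ⟨y, hy, rfl⟩
      convert hy using 1
      rw [smul_add, smul_smul, smul_smul, mul_inv_cancel₀ hk, one_smul, one_smul,
        add_sub_cancel_left]
    · beta_reduce
      rw [← smul_add, add_sub_cancel, smul_smul, inv_mul_cancel₀ hk, one_smul]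
  obtain ⟨g, hg⟩ : (⋂ x, F x).Nonempty := by
    refine Convex.helly_theorem_compact' (𝕜 := ℝ) (fun x => ?_) (fun x => ?_) (fun I hI => ?_)
    · exact (hconv.smul _).affinity _ _
    · exact (hcpt.smul _).image (by fun_prop)
    · refine ⟨((k : ℝ) + 1)⁻¹ • (∑ x ∈ I, (x : E) + (k + 1 - #I) • c₀),
        Set.mem_iInter₂.2 fun x hx => (mem_F x _).2 ?_⟩
      rw [smul_smul, mul_inv_cancel₀ hk, one_smul]
      exact hconv.sum_add_nsmul_sub_mem_smul hc₀ (fun x _ => x.2) hI hx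
  rw [Set.mem_iInter] at hg
  refine ⟨g, ?_, fun x hx => (mem_F ⟨x, hx⟩ g).1 (hg _)⟩
  have hg₀ : ((k : ℝ) + 1) • g ∈ (1 + (k : ℝ)) • C := by
    rw [hconv.add_smul zero_le_one (Nat.cast_nonneg _), one_smul]
    simpa using Set.add_mem_add hc₀ ((mem_F ⟨c₀, hc₀⟩ g).1 (hg _))
  rw [add_comm 1 (k : ℝ)] at hg₀
  exact (Set.smul_mem_smul_set_iff₀ hk _ _).1 hg₀

theorem Convex.exists_mem_forall_smul_sub_mem_smul_of_vectorSpan_le {C : Set E}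
    {V : Submodule ℝ E} [FiniteDimensional ℝ V] (hV : vectorSpan ℝ C ≤ V)
    (hconv : Convex ℝ C) (hcpt : IsCompact C) (hne : C.Nonempty) :
    ∃ g ∈ C, ∀ x ∈ C, ((finrank ℝ V : ℝ) + 1) • g - x ∈ (finrank ℝ V : ℝ) • C := by
  obtain ⟨c₀, hc₀⟩ := hne
  have hsub : ∀ x ∈ C, x - c₀ ∈ V := fun x hx => hV (vsub_mem_vectorSpan ℝ hx hc₀)
  let φ : V → E := fun v => c₀ + v
  have hφ : Topology.IsInducing φ :=
    (Homeomorph.addLeft c₀).isInducing.comp Topology.IsInducing.subtypeVal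
  have hφC : φ '' (φ ⁻¹' C) = C := by
    refine Set.image_preimage_eq_of_subset fun x hx => ⟨⟨x - c₀, hsub x hx⟩, ?_⟩
    simp [φ]
  obtain ⟨g, hg, hgC⟩ := Convex.exists_mem_forall_smul_sub_mem_smul (E := V) (C := φ ⁻¹' C)
    ((hconv.translate_preimage_right c₀).linear_preimage V.subtype)
    (hφ.isCompact_iff.2 (by rwa [hφC])) ⟨⟨0, V.zero_mem⟩, by simpa [φ] using hc₀⟩
  refine ⟨φ g, hg, fun x hx => ?_⟩
  obtain ⟨y, hy, hxy⟩ := hgC ⟨x - c₀, hsub x hx⟩ (by simpa [φ] using hx)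
  refine ⟨φ y, hy, ?_⟩
  have hxy' := congrArg Subtype.val hxy
  simp only [SetLike.val_smul, AddSubgroupClass.coe_sub] at hxy'
  simp only [φ, smul_add, hxy']
  module

end Convex

theorem Matrix.PosSemidef.norm_apply_sq_le {ι : Type*} [Fintype ι] {M : Matrix ι ι ℂ}
    (hM : M.PosSemidef) (i j : ι) : ‖M i j‖ ^ 2 ≤ (M i i).re * (M j j).re := by
  have hdet := (Complex.le_def.1 (hM.submatrix ![i, j]).det_nonneg).1
  have hji : M j i = star (M i j) := (hM.1.apply j i).symm
  have hii := (Complex.le_def.1 (hM.diag_nonneg (i := i))).2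
  have hjj := (Complex.le_def.1 (hM.diag_nonneg (i := j))).2
  rw [det_fin_two] at hdet
  simp only [submatrix_apply, Matrix.cons_val_zero, Matrix.cons_val_one, hji,
    Complex.star_def, Complex.mul_conj, Complex.sub_re, Complex.mul_re,
    Complex.ofReal_re, Complex.zero_re] at hdet
  simp only [Complex.zero_im] at hii hjj
  rw [Complex.sq_norm]
  nlinarith

theorem Matrix.PosSemidef.norm_apply_le_re_trace {ι : Type*} [Fintype ι] {M : Matrix ι ι ℂ}
    (hM : M.PosSemidef) (i j : ι) : ‖M i j‖ ≤ M.trace.re := by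
  have hdiag : ∀ k, 0 ≤ (M k k).re := fun k => (Complex.le_def.1 hM.diag_nonneg).1
  have hle : ∀ k, (M k k).re ≤ M.trace.re := fun k => by
    rw [trace, Complex.re_sum]
    exact single_le_sum (fun l _ => hdiag l) (mem_univ k)
  refine le_of_pow_le_pow_left₀ two_ne_zero ((hdiag i).trans (hle i)) ?_
  calc ‖M i j‖ ^ 2 ≤ (M i i).re * (M j j).re := hM.norm_apply_sq_le i j
    _ ≤ M.trace.re ^ 2 := by
      rw [sq]; exact mul_le_mul (hle i) (hle j) (hdiag j) ((hdiag i).trans (hle i))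

theorem Matrix.isClosed_setOf_posSemidef {ι : Type*} [Fintype ι] :
    IsClosed {M : Matrix ι ι ℂ | M.PosSemidef} := by
  simp_rw [Matrix.posSemidef_iff_dotProduct_mulVec, Set.ofPred_and, Set.ofPred_forall]
  exact (isClosed_eq (by fun_prop) continuous_id).inter
    (isClosed_iInter fun x => isClosed_le continuous_const (by fun_prop))

theorem Matrix.PosSemidef.natCast_smul_sub_of_eq {ι : Type*} [Fintype ι]
    {g y σ : Matrix ι ι ℂ} (hg : g.PosSemidef) (hy : y.PosSemidef) {k N : ℕ} (hkN : k + 1 ≤ N)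
    (h : ((k : ℝ) + 1) • g - σ = (k : ℝ) • y) : ((N : ℂ) • g - σ).PosSemidef := by
  have : (N : ℂ) • g - σ = ((N - (k + 1) : ℕ) : ℝ) • g + (k : ℝ) • y := by
    rw [← h, Nat.cast_sub hkN, Nat.cast_smul_eq_nsmul ℂ, ← Nat.cast_smul_eq_nsmul ℝ]
    module
  rw [this]
  exact (hg.smul (Nat.cast_nonneg _)).add (hy.smul (Nat.cast_nonneg _))

theorem permMatrixOn_mul_mul_conjTranspose {A : Type*} [Fintype A] [DecidableEq A] {n : ℕ}
    (π : Equiv.Perm (Fin n)) (M : Matrix (Fin n → A) (Fin n → A) ℂ) :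
    permMatrixOn A π * M * (permMatrixOn A π)ᴴ = M.submatrix (· ∘ π) (· ∘ π) := by
  ext v w
  simp [Matrix.mul_apply, permMatrixOn, Matrix.conjTranspose_apply]

section SymmetricState

variable {n d : ℕ}

theorem isSymmetricState_iff {σ : Matrix (Fin n → Fin d) (Fin n → Fin d) ℂ} :
    IsSymmetricState σ ↔ ∀ (π : Equiv.Perm (Fin n)) v w, σ (v ∘ π) (w ∘ π) = σ v w := by
  simp only [IsSymmetricState, permMatrixOn_mul_mul_conjTranspose, ← Matrix.ext_iff,
    submatrix_apply]

theorem IsSymmetricState.apply_eq_of_ofFn_eq {σ : Matrix (Fin n → Fin d) (Fin n → Fin d) ℂ}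
    (hσ : IsSymmetricState σ) {v w v' w' : Fin n → Fin d}
    (h : Sym.ofFn (fun i => (v i, w i)) = Sym.ofFn fun i => (v' i, w' i)) :
    σ v' w' = σ v w := by
  obtain ⟨π, hπ⟩ := Sym.exists_perm_of_ofFn_eq h
  have hv : v' = v ∘ π := funext fun i => congrArg Prod.fst (congrFun hπ i)
  have hw : w' = w ∘ π := funext fun i => congrArg Prod.snd (congrFun hπ i)
  rw [hv, hw, isSymmetricState_iff.1 hσ π v w]

variable (n d) in
def symmetricHermitian : Submodule ℝ (Matrix (Fin n → Fin d) (Fin n → Fin d) ℂ) where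
  carrier := {M | M.IsHermitian ∧ IsSymmetricState M}
  add_mem' := by
    rintro M N ⟨hM, hM'⟩ ⟨hN, hN'⟩
    refine ⟨hM.add hN, isSymmetricState_iff.2 fun π v w => ?_⟩
    simp [isSymmetricState_iff.1 hM' π v w, isSymmetricState_iff.1 hN' π v w]
  zero_mem' := ⟨isHermitian_zero, isSymmetricState_iff.2 fun _ _ _ => rfl⟩
  smul_mem' := by
    rintro r M ⟨hM, hM'⟩
    refine ⟨hM.smul (IsSelfAdjoint.all r), isSymmetricState_iff.2 fun π v w => ?_⟩
    simp [isSymmetricState_iff.1 hM' π v w]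

variable (n d) in
def tracelessSymmetricHermitian : Submodule ℝ (Matrix (Fin n → Fin d) (Fin n → Fin d) ℂ) :=
  symmetricHermitian n d ⊓ LinearMap.ker ((traceLinearMap (Fin n → Fin d) ℂ ℂ).restrictScalars ℝ)

variable (n d) in
def symmetricDensityMatrices : Set (Matrix (Fin n → Fin d) (Fin n → Fin d) ℂ) :=
  {σ | IsDensityMatrix σ ∧ IsSymmetricState σ}

theorem convex_symmetricDensityMatrices : Convex ℝ (symmetricDensityMatrices n d) := by
  rintro σ ⟨⟨hσ, htσ⟩, hσ'⟩ τ ⟨⟨hτ, htτ⟩, hτ'⟩ a b ha hb hab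
  refine ⟨⟨(hσ.smul ha).add (hτ.smul hb), ?_⟩,
    ((symmetricHermitian n d).add_mem ((symmetricHermitian n d).smul_mem a ⟨hσ.1, hσ'⟩)
      ((symmetricHermitian n d).smul_mem b ⟨hτ.1, hτ'⟩)).2⟩
  rw [trace_add, trace_smul, trace_smul, htσ, htτ, ← add_smul, hab, one_smul]

theorem isClosed_symmetricDensityMatrices : IsClosed (symmetricDensityMatrices n d) := by
  have : symmetricDensityMatrices n d = {σ | σ.PosSemidef} ∩ {σ | σ.trace = 1} ∩
      ⋂ π, {σ | permMatrixOn (Fin d) π * σ * (permMatrixOn (Fin d) π)ᴴ = σ} := by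
    ext σ
    simp [symmetricDensityMatrices, IsDensityMatrix, IsSymmetricState]
  rw [this]
  refine (isClosed_setOf_posSemidef.inter (isClosed_eq ?_ continuous_const)).inter
    (isClosed_iInter fun π => isClosed_eq ?_ continuous_id)
  · exact continuous_id.matrix_trace
  · exact (continuous_const.matrix_mul continuous_id).matrix_mul continuous_const

theorem isCompact_symmetricDensityMatrices : IsCompact (symmetricDensityMatrices n d) := by
  let ball : Set (Matrix (Fin n → Fin d) (Fin n → Fin d) ℂ) :=
    Set.univ.pi fun _ => Set.univ.pi fun _ => Metric.closedBall 0 1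
  have hball : IsCompact ball :=
    isCompact_univ_pi fun _ => isCompact_univ_pi fun _ => isCompact_closedBall 0 1
  refine hball.of_isClosed_subset isClosed_symmetricDensityMatrices ?_
  rintro σ ⟨⟨hσ, htσ⟩, -⟩ v - w -
  simpa [htσ] using hσ.norm_apply_le_re_trace v w

theorem maximallyMixed_mem_symmetricDensityMatrices (hd : 1 ≤ d) :
    ((d ^ n : ℝ)⁻¹ • (1 : Matrix (Fin n → Fin d) (Fin n → Fin d) ℂ)) ∈
      symmetricDensityMatrices n d := by
  refine ⟨⟨PosSemidef.one.smul (by positivity), ?_⟩, isSymmetricState_iff.2 fun π v w => ?_⟩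
  · have : (d : ℂ) ^ n ≠ 0 := pow_ne_zero _ (by exact_mod_cast (by omega : d ≠ 0))
    simp [trace_smul, this]
  · simp [one_apply, π.surjective.injective_comp_right.eq_iff]

theorem vectorSpan_symmetricDensityMatrices_le :
    vectorSpan ℝ (symmetricDensityMatrices n d) ≤ tracelessSymmetricHermitian n d := by
  rw [vectorSpan_def, Submodule.span_le]
  rintro _ ⟨σ, ⟨⟨hσ, htσ⟩, hσ'⟩, τ, ⟨⟨hτ, htτ⟩, hτ'⟩, rfl⟩
  refine ⟨(symmetricHermitian n d).sub_mem ⟨hσ.1, hσ'⟩ ⟨hτ.1, hτ'⟩, ?_⟩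
  simp [trace_sub, htσ, htτ]

theorem finrank_tracelessSymmetricHermitian_lt (hd : 1 ≤ d) :
    finrank ℝ (tracelessSymmetricHermitian n d) < finrank ℝ (symmetricHermitian n d) := by
  refine Submodule.finrank_lt_finrank_of_lt (SetLike.lt_iff_le_and_exists.2 ⟨inf_le_left, ?_⟩)
  obtain ⟨⟨hσ, htσ⟩, hσ'⟩ := maximallyMixed_mem_symmetricDensityMatrices (n := n) hd
  exact ⟨_, ⟨hσ.1, hσ'⟩, fun h => one_ne_zero (htσ.symm.trans (LinearMap.mem_ker.1 h.2))⟩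

variable (n d) in
def orbitSum : symmetricHermitian n d →ₗ[ℝ] (Sym (Fin d × Fin d) n → ℝ) where
  toFun M q := ∑ p : (Fin n → Fin d) × (Fin n → Fin d) with
      Sym.ofFn (fun i => (p.1 i, p.2 i)) = q,
    (((M : Matrix _ _ ℂ) p.1 p.2).re + ((M : Matrix _ _ ℂ) p.1 p.2).im)
  map_add' M N := by
    ext q
    simp only [Submodule.coe_add, Matrix.add_apply, Complex.add_re, Complex.add_im,
      Pi.add_apply, ← sum_add_distrib]
    exact sum_congr rfl fun _ _ => by ring
  map_smul' r M := by
    ext q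
    simp only [SetLike.val_smul, Matrix.smul_apply, Complex.real_smul, Complex.re_ofReal_mul,
      Complex.im_ofReal_mul, RingHom.id_apply, Pi.smul_apply, smul_eq_mul, mul_sum, mul_add]

/- The values `re + im` at `(v, w)` and at `(w, v)` determine a Hermitian entry, and an invariant
matrix is constant on each fiber of `Sym.ofFn`. -/
theorem orbitSum_injective : Function.Injective (orbitSum n d) := by
  rw [← LinearMap.ker_eq_bot, Submodule.eq_bot_iff]
  rintro ⟨M, hM, hM'⟩ hM0
  have hsum : ∀ v w, (M v w).re + (M v w).im = 0 := fun v w => by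
    have h := congrFun hM0 (Sym.ofFn fun i => (v i, w i))
    simp only [orbitSum, LinearMap.coe_mk, AddHom.coe_mk, Pi.zero_apply] at h
    rw [sum_congr rfl fun p hp => by rw [hM'.apply_eq_of_ofFn_eq (mem_filter.1 hp).2.symm],
      sum_const, nsmul_eq_mul] at h
    refine (mul_eq_zero.1 h).resolve_left (Nat.cast_ne_zero.2 (card_ne_zero.2 ⟨(v, w), ?_⟩))
    simp
  ext v w
  have hvw := hsum v w
  have hwv := hsum w v
  rw [← hM.apply w v] at hwv
  simp only [Complex.star_def, Complex.conj_re, Complex.conj_im] at hwv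
  apply Complex.ext <;> simp <;> linarith

theorem finrank_symmetricHermitian_le :
    finrank ℝ (symmetricHermitian n d) ≤ (n + 1) ^ (d ^ 2 - 1) :=
  calc finrank ℝ (symmetricHermitian n d)
      ≤ finrank ℝ (Sym (Fin d × Fin d) n → ℝ) :=
        LinearMap.finrank_le_finrank_of_injective orbitSum_injective
    _ = Nat.multichoose (d ^ 2) n := by
        rw [Module.finrank_fintype_fun_eq_card, Sym.card_sym_eq_multichoose]; simp [sq]
    _ ≤ (n + 1) ^ (d ^ 2 - 1) := Nat.multichoose_le_pow _ _

end SymmetricState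

theorem universal_symmetric_state_exists_general (d n : ℕ) (hd : 1 ≤ d) :
    ∃ σu : Matrix (Fin n → Fin d) (Fin n → Fin d) ℂ,
      IsDensityMatrix σu ∧ IsSymmetricState σu ∧
      ∀ σ : Matrix (Fin n → Fin d) (Fin n → Fin d) ℂ,
        IsDensityMatrix σ → IsSymmetricState σ →
        ((((n : ℂ) + 1) ^ (d ^ 2 - 1)) • σu - σ).PosSemidef := by
  obtain ⟨σu, ⟨hσu, hσu'⟩, hσu_center⟩ :=
    Convex.exists_mem_forall_smul_sub_mem_smul_of_vectorSpan_le
      vectorSpan_symmetricDensityMatrices_le convex_symmetricDensityMatrices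
      isCompact_symmetricDensityMatrices ⟨_, maximallyMixed_mem_symmetricDensityMatrices hd⟩
  refine ⟨σu, hσu, hσu', fun σ hσ hσ' => ?_⟩
  obtain ⟨y, ⟨⟨hy, -⟩, -⟩, hy_eq⟩ := hσu_center σ ⟨hσ, hσ'⟩
  have hdim := (finrank_tracelessSymmetricHermitian_lt (n := n) hd).trans_le
    finrank_symmetricHermitian_le
  exact_mod_cast hσu.1.natCast_smul_sub_of_eq hy hdim hy_eq.symm

/-- Existence of a universal symmetric state: there is a symmetric
density matrix `σ^u` on `(ℂ^d)^{⊗n}` with `σ ≤ (n+1)^{d²−1}·σ^u` for every symmetric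
density matrix `σ`. -/
theorem universal_symmetric_state_exists (d n : ℕ) (hd : 1 ≤ d) (hn : 1 ≤ n) :
    ∃ σu : Matrix (Fin n → Fin d) (Fin n → Fin d) ℂ,
      IsDensityMatrix σu ∧ IsSymmetricState σu ∧
      ∀ σ : Matrix (Fin n → Fin d) (Fin n → Fin d) ℂ,
        IsDensityMatrix σ → IsSymmetricState σ →
        ((((n : ℂ) + 1) ^ (d ^ 2 - 1)) • σu - σ).PosSemidef :=
  universal_symmetric_state_exists_general d n hd

end
end

section
/- Let N : x ↦ ρ_x be a classical-quantum channel with finite input alphabet X, and let ρ_XB := Σ_x (1/|X|)·|x⟩⟨x| ⊗ ρ_x be the cq state with uniform input distribution. Suppose a data-compression-with-side-information scheme for n copies of ρ_XB, with bijection f = (f̂, f̃) : X^n → Ĉ × C̃ and POVMs {Λ^{c̃}_{ĉ}}, has error probability P_err. Then there exists an (n, |Ĉ|) code for N whose average error probability is at most P_err. -/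
open scoped Kronecker ComplexOrder
open Matrix Filter

noncomputable section

/-! With the uniform prior, the error of the compression scheme is the average over `c̃` of the
average error of the channel code with codewords `f⁻¹(ĉ, c̃)` and decoder `{Λ^{c̃}_ĉ}_ĉ`, so the
best `c̃` does at least as well. -/

def avgCodeErr {X B M : Type*} [Fintype B] [Fintype M] {n : ℕ} (ρ : X → Matrix B B ℂ)
    (c : M → Fin n → X) (Λ : M → Matrix (Fin n → B) (Fin n → B) ℂ) : ℝ :=
  1 - (Fintype.card M : ℝ)⁻¹ * ∑ m, ((Λ m * prodState ρ (c m)).trace).re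

theorem exists_le_inv_card_mul_sum {ι : Type*} [Fintype ι] [Nonempty ι] (g : ι → ℝ) :
    ∃ i, g i ≤ (Fintype.card ι : ℝ)⁻¹ * ∑ j, g j := by
  obtain ⟨i, -, hi⟩ := Finset.exists_le_of_sum_le Finset.univ_nonempty
    (f := g) (g := fun _ => (Fintype.card ι : ℝ)⁻¹ * ∑ j, g j) <| by
      rw [Finset.sum_const, Finset.card_univ, nsmul_eq_mul, ← mul_assoc,
        mul_inv_cancel₀ (Nat.cast_ne_zero.mpr Fintype.card_ne_zero), one_mul]
  exact ⟨i, hi⟩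

theorem card_mul_card_eq_card_pow_of_equiv {ι X A B : Type*} [Fintype ι] [DecidableEq ι]
    [Fintype X] [Fintype A] [Fintype B] (e : (ι → X) ≃ A × B) :
    Fintype.card A * Fintype.card B = Fintype.card X ^ Fintype.card ι := by
  rw [← Fintype.card_prod, ← Fintype.card_congr e, Fintype.card_fun]

section DataCompression

variable {X : Type*} [Fintype X] {d n : ℕ} (ρ : X → Matrix (Fin d) (Fin d) ℂ)
  {Chat Ctil : Type*} [Fintype Chat] [Fintype Ctil] (f : (Fin n → X) ≃ Chat × Ctil)
  (Λ : Ctil → Chat → Matrix (Fin n → Fin d) (Fin n → Fin d) ℂ)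

theorem dcErr_uniform_eq_average_avgCodeErr [Nonempty X] :
    dcErr (fun _ => (Fintype.card X : ℝ)⁻¹) ρ n f Λ =
      (Fintype.card Ctil : ℝ)⁻¹ * ∑ ct, avgCodeErr ρ (fun ch => f.symm (ch, ct)) (Λ ct) := by
  have hcard := Fintype.card_fin n ▸ card_mul_card_eq_card_pow_of_equiv f
  have hpos : 0 < Fintype.card Chat * Fintype.card Ctil := hcard ▸ pow_pos Fintype.card_pos n
  have hChat : (Fintype.card Chat : ℝ) ≠ 0 := by exact_mod_cast (Nat.pos_of_mul_pos_right hpos).ne'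
  have hCtil : (Fintype.card Ctil : ℝ) ≠ 0 := by exact_mod_cast (Nat.pos_of_mul_pos_left hpos).ne'
  have hweight : ∏ _i : Fin n, (Fintype.card X : ℝ)⁻¹ =
      (Fintype.card Ctil : ℝ)⁻¹ * (Fintype.card Chat : ℝ)⁻¹ := by
    rw [Finset.prod_const, Finset.card_univ, Fintype.card_fin, inv_pow, ← Nat.cast_pow, ← hcard,
      Nat.cast_mul, _root_.mul_inv_rev]
  rw [dcErr, ← Equiv.sum_comp f.symm, Fintype.sum_prod_type, Finset.sum_comm, Finset.mul_sum]
  refine Finset.sum_congr rfl fun ct _ => ?_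
  simp only [Equiv.apply_symm_apply, hweight, avgCodeErr, ← Finset.mul_sum,
    Finset.sum_sub_distrib, Finset.sum_const, Finset.card_univ, nsmul_eq_mul, mul_one]
  field_simp

theorem exists_avgCodeErr_le_dcErr_uniform [Nonempty X] :
    ∃ ct, avgCodeErr ρ (fun ch => f.symm (ch, ct)) (Λ ct) ≤
      dcErr (fun _ => (Fintype.card X : ℝ)⁻¹) ρ n f Λ := by
  have : Nonempty Ctil := ⟨(f (Classical.arbitrary _)).2⟩
  rw [dcErr_uniform_eq_average_avgCodeErr]
  exact exists_le_inv_card_mul_sum _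

end DataCompression

theorem channel_code_from_data_compression_general {X : Type*} [Fintype X]
    [Nonempty X] {d : ℕ}
    (ρ : X → Matrix (Fin d) (Fin d) ℂ)
    (n : ℕ) {Chat Ctil : Type*} [Fintype Chat] [Fintype Ctil]
    (f : (Fin n → X) ≃ Chat × Ctil)
    (Λ : Ctil → Chat → Matrix (Fin n → Fin d) (Fin n → Fin d) ℂ)
    (hΛ : ∀ ctil, (∀ chat, (Λ ctil chat).PosSemidef) ∧ (∑ chat, Λ ctil chat) = 1) :
    ∃ (c : Fin (Fintype.card Chat) → (Fin n → X))
      (Λ' : Fin (Fintype.card Chat) → Matrix (Fin n → Fin d) (Fin n → Fin d) ℂ),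
      (∀ i, (Λ' i).PosSemidef) ∧ (∑ i, Λ' i = 1) ∧
      1 - ((Fintype.card Chat : ℝ))⁻¹ * ∑ i, ((Λ' i * prodState ρ (c i)).trace).re ≤
        dcErr (fun _ => ((Fintype.card X : ℝ))⁻¹) ρ n f Λ := by
  obtain ⟨ct, hct⟩ := exists_avgCodeErr_le_dcErr_uniform ρ f Λ
  let e := (Fintype.equivFin Chat).symm
  refine ⟨fun i => f.symm (e i, ct), fun i => Λ ct (e i), fun i => (hΛ ct).1 (e i),
    by rw [Equiv.sum_comp e (Λ ct), (hΛ ct).2], ?_⟩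
  rwa [Equiv.sum_comp e fun ch => ((Λ ct ch * prodState ρ (f.symm (ch, ct))).trace).re]

/-- Renes. A data-compression-with-side-information scheme for the
uniform-input cq state yields an `(n, |Ĉ|)` channel code with no larger error
probability. -/
theorem channel_code_from_data_compression {X : Type*} [Fintype X] [DecidableEq X]
    [Nonempty X] {d : ℕ}
    (ρ : X → Matrix (Fin d) (Fin d) ℂ) (hρ : ∀ x, IsDensityMatrix (ρ x))
    (n : ℕ) {Chat Ctil : Type*} [Fintype Chat] [Fintype Ctil]
    (f : (Fin n → X) ≃ Chat × Ctil)
    (Λ : Ctil → Chat → Matrix (Fin n → Fin d) (Fin n → Fin d) ℂ)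
    (hΛ : ∀ ctil, (∀ chat, (Λ ctil chat).PosSemidef) ∧ (∑ chat, Λ ctil chat) = 1) :
    ∃ (c : Fin (Fintype.card Chat) → (Fin n → X))
      (Λ' : Fin (Fintype.card Chat) → Matrix (Fin n → Fin d) (Fin n → Fin d) ℂ),
      (∀ i, (Λ' i).PosSemidef) ∧ (∑ i, Λ' i = 1) ∧
      1 - ((Fintype.card Chat : ℝ))⁻¹ * ∑ i, ((Λ' i * prodState ρ (c i)).trace).re ≤
        dcErr (fun _ => ((Fintype.card X : ℝ))⁻¹) ρ n f Λ :=
  channel_code_from_data_compression_general ρ n f Λ hΛ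

end
end
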